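/- arXiv:1301.4949 — 4 statements merged into one kernel-verified Lean document; each statement's English description precedes it below -/
import Mathlib

section
/- For every nonzero v ∈ V, the image of the A-orbit of v under the moment map equals the intrinsic interior of the convex hull of the weights related to v; that is, m_𝔞(A·v) = {m_𝔞(exp(π(X))v) : X ∈ 𝔞} = int(CH(R(v))). -/
/-!
Writing `v = ∑ c α` along the weight spaces, `exp (π X) v = ∑ e^⟪α, X⟫ c α`, and since weight
spaces of a family of self-adjoint operators are orthogonal, the moment map of this vector is
the barycentre of the weights `α` with masses `‖c α‖² e^⟪α, 2X⟫`. Barycentres of `R(v)` with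
positive masses are exactly the points of the relative interior of its convex hull. Given such a
point `p`, every choice of positive masses `b α` can be tilted to `b α e^⟪α, X⟫` with barycentre
`p`: `X ↦ ∑ b α e^⟪α - p, X⟫` is coercive on the span of the `α - p` (as `p` is a positive
combination of the `α`), and at a minimiser its derivative along the vector
`∑ b α e^⟪α - p, X⟫ (α - p)` of that span is the squared norm of this vector.
-/

open scoped InnerProductSpace
open Finset
open scoped Classical
open Filter Topology

/-- The (restricted) moment map of a linear family of operators `π` on an inner
product space `V`: `m v` is the unique element of `E` with
`⟪m v, X⟫ = ⟪π X v, v⟫ / ‖v‖²` for all `X`. -/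
noncomputable def momentMap {E V : Type*} [NormedAddCommGroup E] [InnerProductSpace ℝ E]
    [FiniteDimensional ℝ E] [NormedAddCommGroup V] [InnerProductSpace ℝ V]
    (π : E →ₗ[ℝ] V →L[ℝ] V) (v : V) : E :=
  (InnerProductSpace.toDual ℝ E).symm <| LinearMap.toContinuousLinearMap
    { toFun := fun X => ⟪(π X) v, v⟫_ℝ / ‖v‖ ^ 2
      map_add' := fun X Y => by
        simp [map_add, ContinuousLinearMap.add_apply, inner_add_left, add_div]
      map_smul' := fun c X => by
        simp [map_smul, ContinuousLinearMap.smul_apply, inner_smul_left, mul_div_assoc] }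

theorem NormedSpace.exp_apply_of_apply_eq_smul {V : Type*} [NormedAddCommGroup V]
    [NormedSpace ℝ V] [CompleteSpace V] {A : V →L[ℝ] V} {u : V} {t : ℝ} (h : A u = t • u) :
    NormedSpace.exp A u = Real.exp t • u := by
  have hpow (n : ℕ) : (A ^ n) u = t ^ n • u := by
    induction n with
    | zero => simp
    | succ n ih => rw [pow_succ, mul_apply_eq_comp, h, map_smul, ih, smul_smul, ← pow_succ']
  have hA :=
    (NormedSpace.exp_series_hasSum_exp' (𝕂 := ℝ) A).mapL (ContinuousLinearMap.apply ℝ V u)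
  refine hA.unique ?_
  simp only [ContinuousLinearMap.apply_apply, smul_apply, hpow, smul_smul]
  rw [Real.exp_eq_exp_ℝ]
  exact (NormedSpace.exp_series_hasSum_exp' (𝕂 := ℝ) t).smul_const u

section WeightSpace

variable {𝔞 V : Type*} [NormedAddCommGroup 𝔞] [InnerProductSpace ℝ 𝔞]
  [NormedAddCommGroup V] [InnerProductSpace ℝ V] (π : 𝔞 →ₗ[ℝ] V →L[ℝ] V)

def weightSpace (α : 𝔞) : Submodule ℝ V :=
  ⨅ X, Module.End.eigenspace (π X : Module.End ℝ V) ⟪α, X⟫_ℝ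

variable {π}

theorem mem_weightSpace {α : 𝔞} {u : V} : u ∈ weightSpace π α ↔ ∀ X, π X u = ⟪α, X⟫_ℝ • u := by
  simp [weightSpace, Submodule.mem_iInf]

theorem orthogonalFamily_weightSpace (hπ : ∀ X, (π X : V →ₗ[ℝ] V).IsSymmetric) :
    OrthogonalFamily ℝ (fun α => weightSpace π α) fun α => (weightSpace π α).subtypeₗᵢ := by
  intro α β hαβ u w
  have hne : ⟪α, α - β⟫_ℝ ≠ ⟪β, α - β⟫_ℝ := by
    rw [Ne, ← sub_eq_zero, ← inner_sub_left, inner_self_eq_zero, sub_eq_zero]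
    exact hαβ
  exact (hπ (α - β)).orthogonalFamily_eigenspaces hne
    ⟨u, Module.End.mem_eigenspace_iff.2 (mem_weightSpace.1 u.2 _)⟩
    ⟨w, Module.End.mem_eigenspace_iff.2 (mem_weightSpace.1 w.2 _)⟩

theorem exp_apply_of_mem_weightSpace [CompleteSpace V] {α : 𝔞} {u : V}
    (hu : u ∈ weightSpace π α) (X : 𝔞) :
    NormedSpace.exp (π X) u = Real.exp ⟪α, X⟫_ℝ • u :=
  NormedSpace.exp_apply_of_apply_eq_smul (mem_weightSpace.1 hu X)

variable [FiniteDimensional ℝ 𝔞]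

theorem inner_momentMap (v : V) (Y : 𝔞) :
    ⟪momentMap π v, Y⟫_ℝ = ⟪π Y v, v⟫_ℝ / ‖v‖ ^ 2 := by
  rw [momentMap, InnerProductSpace.toDual_symm_apply]
  rfl

theorem momentMap_sum_of_mem_weightSpace (hπ : ∀ X, (π X : V →ₗ[ℝ] V).IsSymmetric)
    (s : Finset 𝔞) {u : 𝔞 → V} (hu : ∀ α ∈ s, u α ∈ weightSpace π α) :
    momentMap π (∑ α ∈ s, u α) = s.centerMass (fun α => ‖u α‖ ^ 2) id := by
  let l : ∀ α, weightSpace π α := fun α => if h : α ∈ s then ⟨u α, hu α h⟩ else 0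
  have hl : ∀ α ∈ s, (l α : V) = u α := fun α hα => by simp [l, hα]
  have hsum : ∑ α ∈ s, u α = ∑ α ∈ s, (weightSpace π α).subtypeₗᵢ (l α) :=
    sum_congr rfl fun α hα => (hl α hα).symm
  have hO := orthogonalFamily_weightSpace hπ
  refine ext_inner_right ℝ fun Y => ?_
  rw [inner_momentMap, hsum, hO.norm_sum, map_sum]
  have hπl : ∀ α, π Y ((weightSpace π α).subtypeₗᵢ (l α))
      = (weightSpace π α).subtypeₗᵢ (⟪α, Y⟫_ℝ • l α) := fun α =>
    mem_weightSpace.1 (l α).2 Y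
  have hnorm : ∀ α ∈ s, ‖l α‖ = ‖u α‖ := fun α hα => by
    rw [← hl α hα, Submodule.coe_norm]
  simp only [hπl, hO.inner_sum, Finset.centerMass, real_inner_smul_left, sum_inner, id,
    real_inner_self_eq_norm_sq]
  rw [sum_congr rfl fun α hα => by rw [hnorm α hα], div_eq_inv_mul,
    sum_congr rfl fun α hα => by rw [hnorm α hα], mul_sum, mul_sum]
  exact sum_congr rfl fun α _ => by ring

theorem momentMap_exp_apply_sum [CompleteSpace V] (hπ : ∀ X, (π X : V →ₗ[ℝ] V).IsSymmetric)
    {s : Finset 𝔞} {c : 𝔞 → V} (hc : ∀ α ∈ s, c α ∈ weightSpace π α) (X : 𝔞) :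
    momentMap π (NormedSpace.exp (π X) (∑ α ∈ s, c α)) =
      (s.filter fun α => c α ≠ 0).centerMass
        (fun α => ‖c α‖ ^ 2 * Real.exp ⟪α, (2 : ℝ) • X⟫_ℝ) id := by
  rw [map_sum, sum_congr rfl fun α hα => exp_apply_of_mem_weightSpace (hc α hα) X,
    momentMap_sum_of_mem_weightSpace hπ s fun α hα => (weightSpace π α).smul_mem _ (hc α hα),
    Finset.centerMass_subset id (filter_subset _ s) fun α _ hα => by simp_all]
  refine Finset.centerMass_congr_weights fun α _ => ?_
  rw [norm_smul, mul_pow, Real.norm_of_nonneg (Real.exp_pos _).le, real_inner_smul_right,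
    mul_comm, sq (Real.exp _), ← Real.exp_add, two_mul]

end WeightSpace

theorem mem_intrinsicInterior_iff_dist {𝕜 E : Type*} [Ring 𝕜] [AddCommGroup E] [Module 𝕜 E]
    [PseudoMetricSpace E] {s : Set E} {x : E} :
    x ∈ intrinsicInterior 𝕜 s ↔
      x ∈ affineSpan 𝕜 s ∧ ∃ ε > 0, ∀ y ∈ affineSpan 𝕜 s, dist y x < ε → y ∈ s := by
  constructor
  · rintro ⟨⟨x, hxA⟩, hx, rfl⟩
    obtain ⟨ε, hε, hball⟩ := Metric.isOpen_iff.1 isOpen_interior _ hx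
    refine ⟨hxA, ε, hε, fun y hyA hy => ?_⟩
    exact (show (⟨y, hyA⟩ : affineSpan 𝕜 s) ∈ ((↑) ⁻¹' s : Set (affineSpan 𝕜 s)) from
      interior_subset (hball hy))
  · rintro ⟨hxA, ε, hε, hball⟩
    refine ⟨⟨x, hxA⟩, mem_interior.2 ⟨Metric.ball ⟨x, hxA⟩ ε, ?_, Metric.isOpen_ball,
      Metric.mem_ball_self hε⟩, rfl⟩
    rintro ⟨y, hyA⟩ hy
    exact hball y hyA hy

theorem Finset.centerMass_eq_iff_sum_smul_sub_eq_zero {ι E : Type*} [AddCommGroup E]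
    [Module ℝ E] {t : Finset ι} {w : ι → ℝ} {z : ι → E} {p : E} (hw : ∑ i ∈ t, w i ≠ 0) :
    t.centerMass w z = p ↔ ∑ i ∈ t, w i • (z i - p) = 0 := by
  simp only [smul_sub, sum_sub_distrib, ← sum_smul, Finset.centerMass, sub_eq_zero]
  rw [inv_smul_eq_iff₀ hw, eq_comm]

section Barycentre

variable {E : Type*} [NormedAddCommGroup E] [NormedSpace ℝ E]

theorem Convex.combo_intrinsicInterior_self_mem_intrinsicInterior {s : Set E}
    (hs : Convex ℝ s) {x y : E} (hx : x ∈ intrinsicInterior ℝ s) (hy : y ∈ s) {a b : ℝ}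
    (ha : 0 < a) (hb : 0 ≤ b) (hab : a + b = 1) :
    a • x + b • y ∈ intrinsicInterior ℝ s := by
  obtain ⟨hxA, ε, hε, hball⟩ := mem_intrinsicInterior_iff_dist.1 hx
  have hyA := subset_affineSpan ℝ s hy
  have hpA : a • x + b • y ∈ affineSpan ℝ s := by
    have := AffineMap.lineMap_mem a hyA hxA
    rwa [AffineMap.lineMap_apply_module, ← eq_sub_of_add_eq' hab, add_comm] at this
  refine mem_intrinsicInterior_iff_dist.2 ⟨hpA, a * ε, mul_pos ha hε, fun z hzA hz => ?_⟩
  -- `z` is the image of `z'` under the homothety of ratio `a` centred at `y`.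
  set z' := x + a⁻¹ • (z - (a • x + b • y))
  have hz'A : z' ∈ affineSpan ℝ s := by
    have := (affineSpan ℝ s).direction.smul_mem a⁻¹ (AffineSubspace.vsub_mem_direction hzA hpA)
    rw [show z' = a⁻¹ • (z -ᵥ (a • x + b • y)) +ᵥ x from add_comm _ _]
    exact AffineSubspace.vadd_mem_of_mem_direction this hxA
  have hz' : dist z' x < ε := by
    rw [dist_eq_norm, add_sub_cancel_left, norm_smul, ← dist_eq_norm,
      Real.norm_of_nonneg (inv_nonneg.2 ha.le), inv_mul_lt_iff₀ ha]
    exact hz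
  have hzz' : z = a • z' + b • y := by
    simp only [z', smul_add, smul_smul, mul_inv_cancel₀ ha.ne', one_smul]
    abel
  rw [hzz']
  exact hs (hball z' hz'A hz') hy ha.le hb hab

theorem Finset.centerMass_mem_intrinsicInterior_convexHull [FiniteDimensional ℝ E]
    {Φ : Finset E} (hΦ : Φ.Nonempty) {w : E → ℝ} (hw : ∀ α ∈ Φ, 0 < w α) :
    Φ.centerMass w id ∈ intrinsicInterior ℝ (convexHull ℝ (Φ : Set E)) := by
  wlog hw1 : ∑ α ∈ Φ, w α = 1 generalizing w
  · have hW : 0 < ∑ α ∈ Φ, w α := sum_pos hw hΦ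
    rw [← Φ.centerMass_smul_left id (inv_pos.2 hW).ne']
    refine this (fun α hα => mul_pos (inv_pos.2 hW) (hw α hα)) ?_
    simp only [Pi.smul_apply, smul_eq_mul, ← mul_sum, inv_mul_cancel₀ hW.ne']
  obtain ⟨q, hq⟩ := (convexHull_nonempty_iff.2 (coe_nonempty.2 hΦ)).intrinsicInterior
    (convex_convexHull ℝ (Φ : Set E))
  obtain ⟨μ, hμ0, hμ1, rfl⟩ := Finset.mem_convexHull.1 (intrinsicInterior_subset hq)
  -- Once `ε` is small, `w = ε μ + (1 - ε) ρ` for a convex weight `ρ`.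
  obtain ⟨ε, ⟨hε1, hεμ⟩, hε0⟩ : ∃ ε : ℝ, (ε < 1 ∧ ∀ α ∈ Φ, ε * μ α < w α) ∧ 0 < ε := by
    refine ((Filter.Eventually.and ?_ ?_).filter_mono nhdsWithin_le_nhds |>.and
      self_mem_nhdsWithin).exists (f := 𝓝[>] (0 : ℝ))
    · exact gt_mem_nhds zero_lt_one
    · refine (eventually_all_finset Φ).2 fun α hα => ?_
      have : Filter.Tendsto (fun ε : ℝ => ε * μ α) (𝓝 0) (𝓝 (0 * μ α)) :=
        tendsto_id.mul_const _
      rw [zero_mul] at this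
      exact this.eventually (gt_mem_nhds (hw α hα))
  set ρ : E → ℝ := fun α => (w α - ε * μ α) / (1 - ε)
  have hρ1 : ∑ α ∈ Φ, ρ α = 1 := by
    rw [← sum_div, sum_sub_distrib, ← mul_sum, hw1, hμ1, mul_one, div_self (by linarith)]
  have hr : Φ.centerMass ρ id ∈ convexHull ℝ (Φ : Set E) :=
    Φ.centerMass_id_mem_convexHull (fun α hα => div_nonneg (sub_pos.2 (hεμ α hα)).le
      (by linarith)) (by rw [hρ1]; exact one_pos)
  have hcombo : ε • Φ.centerMass μ id + (1 - ε) • Φ.centerMass ρ id = Φ.centerMass w id := by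
    rw [Finset.centerMass_segment _ _ _ _ hμ1 hρ1 _ _ (add_sub_cancel ε 1)]
    refine Finset.centerMass_congr_weights fun α _ => ?_
    have : (1 : ℝ) - ε ≠ 0 := by linarith
    simp only [ρ]
    field_simp
    ring
  rw [← hcombo]
  exact (convex_convexHull ℝ _).combo_intrinsicInterior_self_mem_intrinsicInterior hq hr hε0
    (by linarith) (add_sub_cancel ε 1)

theorem Finset.exists_pos_centerMass_eq_of_mem_intrinsicInterior_convexHull {Φ : Finset E}
    {p : E} (hp : p ∈ intrinsicInterior ℝ (convexHull ℝ (Φ : Set E))) :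
    ∃ w : E → ℝ, (∀ α ∈ Φ, 0 < w α) ∧ Φ.centerMass w id = p := by
  obtain ⟨hpA, ε, hε, hball⟩ := mem_intrinsicInterior_iff_dist.1 hp
  have hΦ : Φ.Nonempty := by
    simpa using (convexHull_nonempty_iff (𝕜 := ℝ)).1 ⟨p, intrinsicInterior_subset hp⟩
  set ν : E → ℝ := fun _ => (#Φ : ℝ)⁻¹
  have hν1 : ∑ α ∈ Φ, ν α = 1 := by
    rw [sum_const, nsmul_eq_mul, mul_inv_cancel₀ (Nat.cast_ne_zero.2 hΦ.card_pos.ne')]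
  set q := Φ.centerMass ν id
  have hqA : q ∈ affineSpan ℝ (convexHull ℝ (Φ : Set E)) :=
    subset_affineSpan _ _ <| Φ.centerMass_id_mem_convexHull
      (fun _ _ => inv_nonneg.2 (Nat.cast_nonneg _)) (by rw [hν1]; exact one_pos)
  -- `r` lies slightly beyond `p` on the ray from the centroid `q`.
  obtain ⟨δ, hδε, hδ0⟩ : ∃ δ : ℝ, δ * ‖p - q‖ < ε ∧ 0 < δ := by
    have : Tendsto (fun δ : ℝ => δ * ‖p - q‖) (𝓝 0) (𝓝 (0 * ‖p - q‖)) :=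
      tendsto_id.mul_const _
    rw [zero_mul] at this
    exact ((this.eventually (gt_mem_nhds hε)).filter_mono nhdsWithin_le_nhds |>.and
      self_mem_nhdsWithin).exists (f := 𝓝[>] (0 : ℝ))
  set r := p + δ • (p - q)
  have hrA : r ∈ affineSpan ℝ (convexHull ℝ (Φ : Set E)) := by
    have := AffineMap.lineMap_mem (1 + δ) hqA hpA
    rwa [AffineMap.lineMap_apply_module, show (1 - (1 + δ)) • q + (1 + δ) • p = r by module]
      at this
  have hr : r ∈ convexHull ℝ (Φ : Set E) := by
    refine hball r hrA ?_
    rwa [dist_eq_norm, add_sub_cancel_left, norm_smul, Real.norm_of_nonneg hδ0.le]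
  obtain ⟨ρ, hρ0, hρ1, hρr⟩ := Finset.mem_convexHull.1 hr
  have hδ1 : (0 : ℝ) < 1 + δ := by linarith
  refine ⟨fun α => (1 + δ)⁻¹ * ρ α + (δ / (1 + δ)) * ν α, fun α hα => ?_, ?_⟩
  · have := hρ0 α hα
    positivity
  · rw [← Finset.centerMass_segment _ _ _ _ hρ1 hν1 _ _ (by field_simp), hρr]
    simp only [r]
    match_scalars <;> field_simp
    ring

end Barycentre

theorem exists_pos_mul_norm_le_of_homogeneous {F : Type*} [NormedAddCommGroup F]
    [NormedSpace ℝ F] [FiniteDimensional ℝ F] {g : F → ℝ} (hg : Continuous g)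
    (hhom : ∀ c : ℝ, 0 < c → ∀ x, g (c • x) = c * g x) (hpos : ∀ x ≠ 0, 0 < g x) :
    ∃ δ > 0, ∀ x, δ * ‖x‖ ≤ g x := by
  have hg0 : g 0 = 0 := by
    have := hhom 2 two_pos 0
    rw [smul_zero] at this
    linarith
  rcases subsingleton_or_nontrivial F with hF | hF
  · exact ⟨1, one_pos, fun x => by rw [Subsingleton.elim x 0, norm_zero, hg0, mul_zero]⟩
  obtain ⟨x₀, hx₀, hmin⟩ := (isCompact_sphere (0 : F) 1).exists_isMinOn
    (NormedSpace.sphere_nonempty.2 zero_le_one) hg.continuousOn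
  have hx₀0 : x₀ ≠ 0 := by
    rintro rfl
    simp at hx₀
  refine ⟨g x₀, hpos x₀ hx₀0, fun x => ?_⟩
  rcases eq_or_ne x 0 with rfl | hx
  · rw [norm_zero, mul_zero, hg0]
  have hxn : 0 < ‖x‖ := norm_pos_iff.2 hx
  have := hmin (a := ‖x‖⁻¹ • x) (by simp [norm_smul, hxn.ne'])
  rwa [Set.mem_ofPred_eq, hhom _ (inv_pos.2 hxn), le_inv_mul_iff₀ hxn, mul_comm] at this

section PositiveRelation

variable {ι E : Type*} [NormedAddCommGroup E] [InnerProductSpace ℝ E] {s : Finset ι}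
  {v : ι → E} {t : ι → ℝ}

theorem eq_zero_of_mem_span_of_inner_nonpos (ht : ∀ i ∈ s, 0 < t i)
    (hrel : ∑ i ∈ s, t i • v i = 0) {X : E} (hX : X ∈ Submodule.span ℝ (v '' s))
    (hle : ∀ i ∈ s, ⟪v i, X⟫_ℝ ≤ 0) : X = 0 := by
  have hsum : ∑ i ∈ s, t i * ⟪v i, X⟫_ℝ = 0 := by
    simp only [← real_inner_smul_left, ← sum_inner, hrel, inner_zero_left]
  have hzero : ∀ i ∈ s, ⟪v i, X⟫_ℝ = 0 := fun i hi =>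
    (mul_eq_zero.1 ((sum_eq_zero_iff_of_nonpos fun j hj =>
      mul_nonpos_of_nonneg_of_nonpos (ht j hj).le (hle j hj)).1 hsum i hi)).resolve_left
      (ht i hi).ne'
  have hperp : Submodule.span ℝ (v '' s) ≤ (ℝ ∙ X)ᗮ := by
    rw [Submodule.span_le]
    rintro _ ⟨i, hi, rfl⟩
    rw [SetLike.mem_coe, Submodule.mem_orthogonal_singleton_iff_inner_right, real_inner_comm]
    exact hzero i hi
  exact inner_self_eq_zero.1 (Submodule.mem_orthogonal_singleton_iff_inner_right.1 (hperp hX))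

theorem exists_pos_mul_norm_le_sum_mul_max_inner [FiniteDimensional ℝ E] {b : ι → ℝ}
    (hb : ∀ i ∈ s, 0 < b i) (ht : ∀ i ∈ s, 0 < t i) (hrel : ∑ i ∈ s, t i • v i = 0) :
    ∃ δ > 0, ∀ X ∈ Submodule.span ℝ (v '' s),
      δ * ‖X‖ ≤ ∑ i ∈ s, b i * max ⟪v i, X⟫_ℝ 0 := by
  set W := Submodule.span ℝ (v '' s)
  set g : W → ℝ := fun X => ∑ i ∈ s, b i * max ⟪v i, (X : E)⟫_ℝ 0
  have hhom : ∀ c : ℝ, 0 < c → ∀ X, g (c • X) = c * g X := by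
    intro c hc X
    simp only [g, Submodule.coe_smul, real_inner_smul_right, mul_sum]
    refine sum_congr rfl fun i _ => ?_
    rw [← mul_zero c, ← mul_max_of_nonneg _ _ hc.le, mul_zero]
    ring
  have hpos : ∀ X ≠ 0, 0 < g X := by
    intro X hX
    by_contra! hle
    have hnn : ∀ i ∈ s, 0 ≤ b i * max ⟪v i, (X : E)⟫_ℝ 0 := fun i hi =>
      mul_nonneg (hb i hi).le (le_max_right _ _)
    have hzero := (sum_eq_zero_iff_of_nonneg hnn).1 (le_antisymm hle (sum_nonneg hnn))
    refine hX (Subtype.ext (eq_zero_of_mem_span_of_inner_nonpos ht hrel X.2 fun i hi => ?_))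
    exact max_eq_right_iff.1 ((mul_eq_zero.1 (hzero i hi)).resolve_left (hb i hi).ne')
  obtain ⟨δ, hδ, h⟩ := exists_pos_mul_norm_le_of_homogeneous (by fun_prop) hhom hpos
  exact ⟨δ, hδ, fun X hX => h ⟨X, hX⟩⟩

theorem hasDerivAt_sum_mul_exp_inner_add_smul (s : Finset ι) (v : ι → E) (b : ι → ℝ)
    (X Y : E) :
    HasDerivAt (fun r : ℝ => ∑ i ∈ s, b i * Real.exp ⟪v i, X + r • Y⟫_ℝ)
      ⟪∑ i ∈ s, (b i * Real.exp ⟪v i, X⟫_ℝ) • v i, Y⟫_ℝ 0 := by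
  simp only [sum_inner, real_inner_smul_left, inner_add_right, real_inner_smul_right]
  refine HasDerivAt.fun_sum fun i _ => ?_
  have h :=
    (((hasDerivAt_id (0 : ℝ)).mul_const ⟪v i, Y⟫_ℝ).const_add ⟪v i, X⟫_ℝ).exp.const_mul (b i)
  simpa [mul_assoc] using h

theorem exists_sum_mul_exp_inner_smul_eq_zero [FiniteDimensional ℝ E] {b : ι → ℝ}
    (hb : ∀ i ∈ s, 0 < b i) (ht : ∀ i ∈ s, 0 < t i) (hrel : ∑ i ∈ s, t i • v i = 0) :
    ∃ X : E, ∑ i ∈ s, (b i * Real.exp ⟪v i, X⟫_ℝ) • v i = 0 := by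
  set W := Submodule.span ℝ (v '' s)
  set F : E → ℝ := fun X => ∑ i ∈ s, b i * Real.exp ⟪v i, X⟫_ℝ
  obtain ⟨δ, hδ, hcoer⟩ := exists_pos_mul_norm_le_sum_mul_max_inner hb ht hrel
  have hF : ∀ X, ∑ i ∈ s, b i * max ⟪v i, X⟫_ℝ 0 ≤ F X := fun X =>
    sum_le_sum fun i hi => mul_le_mul_of_nonneg_left
      (max_le ((le_add_of_nonneg_right zero_le_one).trans (Real.add_one_le_exp _))
        (Real.exp_pos _).le) (hb i hi).le
  have htend : Tendsto (fun X : W => F X) (cocompact W) atTop :=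
    tendsto_atTop_mono (fun X => (hcoer X X.2).trans (hF X))
      (tendsto_norm_cocompact_atTop.const_mul_atTop hδ)
  obtain ⟨X₀, hX₀⟩ := (by fun_prop : Continuous fun X : W => F X).exists_forall_le htend
  set z := ∑ i ∈ s, (b i * Real.exp ⟪v i, (X₀ : E)⟫_ℝ) • v i
  have hzW : z ∈ W := sum_mem fun i hi => W.smul_mem _ (Submodule.subset_span ⟨i, hi, rfl⟩)
  have hmin : IsLocalMin (fun r : ℝ => F (X₀ + r • z)) 0 :=
    Eventually.of_forall fun r => by simpa using hX₀ (X₀ + r • ⟨z, hzW⟩)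
  exact ⟨X₀, inner_self_eq_zero.1
    (hmin.hasDerivAt_eq_zero (hasDerivAt_sum_mul_exp_inner_add_smul s v b X₀ z))⟩

end PositiveRelation

theorem range_centerMass_mul_exp_inner_eq_intrinsicInterior {E : Type*} [NormedAddCommGroup E]
    [InnerProductSpace ℝ E] [FiniteDimensional ℝ E] {Φ : Finset E} (hΦ : Φ.Nonempty)
    {b : E → ℝ} (hb : ∀ α ∈ Φ, 0 < b α) :
    Set.range (fun X => Φ.centerMass (fun α => b α * Real.exp ⟪α, X⟫_ℝ) id) =
      intrinsicInterior ℝ (convexHull ℝ (Φ : Set E)) := by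
  ext p
  constructor
  · rintro ⟨X, rfl⟩
    exact Φ.centerMass_mem_intrinsicInterior_convexHull hΦ fun α hα =>
      mul_pos (hb α hα) (Real.exp_pos _)
  · intro hp
    obtain ⟨t, ht, htp⟩ := Φ.exists_pos_centerMass_eq_of_mem_intrinsicInterior_convexHull hp
    have hrel := (Φ.centerMass_eq_iff_sum_smul_sub_eq_zero (sum_pos ht hΦ).ne').1 htp
    obtain ⟨X, hX⟩ := exists_sum_mul_exp_inner_smul_eq_zero (v := fun α => α - p) hb ht hrel
    refine ⟨X, (Φ.centerMass_eq_iff_sum_smul_sub_eq_zero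
      (sum_pos (fun α hα => mul_pos (hb α hα) (Real.exp_pos _)) hΦ).ne').2 ?_⟩
    rw [← smul_zero (Real.exp ⟪p, X⟫_ℝ), ← hX, smul_sum]
    refine sum_congr rfl fun α _ => ?_
    rw [smul_smul, inner_sub_left, Real.exp_sub]
    congr 1
    field_simp

theorem momentMap_image_orbit_eq_intrinsicInterior_general
    {𝔞 V : Type*} [NormedAddCommGroup 𝔞] [InnerProductSpace ℝ 𝔞] [FiniteDimensional ℝ 𝔞]
    [NormedAddCommGroup V] [InnerProductSpace ℝ V] [FiniteDimensional ℝ V]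
    (π : 𝔞 →ₗ[ℝ] V →L[ℝ] V)
    (hsa : ∀ X : 𝔞, ∀ v w : V, ⟪(π X) v, w⟫_ℝ = ⟪v, (π X) w⟫_ℝ)
    (ΔV : Finset 𝔞) (v : V) (hv : v ≠ 0)
    -- `c α` is the component of `v` in the weight space `V_α`:
    (c : 𝔞 → V)
    (hc : ∀ α ∈ ΔV, ∀ X : 𝔞, (π X) (c α) = ⟪α, X⟫_ℝ • c α)
    (hsum : v = ∑ α ∈ ΔV, c α) :
    (Set.range fun X : 𝔞 => momentMap π (NormedSpace.exp (π X) v)) =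
      intrinsicInterior ℝ
        (convexHull ℝ ((ΔV.filter fun α => c α ≠ 0 : Finset 𝔞) : Set 𝔞)) := by
  set R := ΔV.filter fun α => c α ≠ 0
  have hR : R.Nonempty := by
    by_contra h
    exact hv (hsum.trans (sum_eq_zero fun α hα =>
      not_not.1 fun hcα => h ⟨α, mem_filter.2 ⟨hα, hcα⟩⟩))
  have horbit : ∀ X, momentMap π (NormedSpace.exp (π X) v) =
      R.centerMass (fun α => ‖c α‖ ^ 2 * Real.exp ⟪α, (2 : ℝ) • X⟫_ℝ) id := fun X => by
    rw [hsum]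
    exact momentMap_exp_apply_sum hsa (fun α hα => mem_weightSpace.2 (hc α hα)) X
  rw [show (fun X => momentMap π (NormedSpace.exp (π X) v)) =
      (fun X => R.centerMass (fun α => ‖c α‖ ^ 2 * Real.exp ⟪α, X⟫_ℝ) id) ∘ fun X => (2 : ℝ) • X
      from funext horbit, Function.Surjective.range_comp
        (fun X => ⟨(2 : ℝ)⁻¹ • X, smul_inv_smul₀ two_ne_zero X⟩)]
  exact range_centerMass_mul_exp_inner_eq_intrinsicInterior hR fun α hα =>
    pow_pos (norm_pos_iff.2 (mem_filter.1 hα).2) 2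

/-- the image of the `A`-orbit of a nonzero vector `v` under the moment
map equals the intrinsic interior of the convex hull of the set of weights related
to `v`. -/
theorem momentMap_image_orbit_eq_intrinsicInterior
    {𝔞 V : Type*} [NormedAddCommGroup 𝔞] [InnerProductSpace ℝ 𝔞] [FiniteDimensional ℝ 𝔞]
    [NormedAddCommGroup V] [InnerProductSpace ℝ V] [FiniteDimensional ℝ V]
    (π : 𝔞 →ₗ[ℝ] V →L[ℝ] V)
    (hsa : ∀ X : 𝔞, ∀ v w : V, ⟪(π X) v, w⟫_ℝ = ⟪v, (π X) w⟫_ℝ)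
    (hcomm : ∀ X Y : 𝔞, Commute (π X) (π Y))
    (ΔV : Finset 𝔞) (v : V) (hv : v ≠ 0)
    -- `c α` is the component of `v` in the weight space `V_α`:
    (c : 𝔞 → V)
    (hc : ∀ α ∈ ΔV, ∀ X : 𝔞, (π X) (c α) = ⟪α, X⟫_ℝ • c α)
    (hsum : v = ∑ α ∈ ΔV, c α) :
    (Set.range fun X : 𝔞 => momentMap π (NormedSpace.exp (π X) v)) =
      intrinsicInterior ℝ
        (convexHull ℝ ((ΔV.filter fun α => c α ≠ 0 : Finset 𝔞) : Set 𝔞)) :=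
  momentMap_image_orbit_eq_intrinsicInterior_general π hsa ΔV v hv c hc hsum
end

section
/- Fix a nonzero v ∈ V and define ρ : 𝔞 → ℝ by ρ(X) = ln‖exp(π(X))v‖². Then for all X, Y ∈ 𝔞, writing ṽ = exp(π(X))v: (1) the first directional derivative satisfies d/dt|_{t=0} ρ(X+tY) = 2⟨m_𝔞(exp(π(X))v), Y⟩; (2) the second directional derivative satisfies d²/dt²|_{t=0} ρ(X+tY) = (4/‖ṽ‖⁴)(‖π(Y)ṽ‖²‖ṽ‖² − ⟨π(Y)ṽ, ṽ⟩²), which is ≥ 0, with equality if and only if π(Y)v = λv for some λ ∈ ℝ. In particular ρ is convex. -/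
/-!
Because the operators `π Z` commute, `exp (π (X + t • Y)) v = exp (t • π Y) ṽ`, so along every line
the orbit solves `u' = A u` with `A = π Y` self-adjoint. Then `(log ‖u‖²)' = 2 ⟪A u, u⟫ / ‖u‖²`, and
differentiating this Rayleigh quotient once more leaves `4 / ‖u‖⁴` times the Cauchy–Schwarz gap
`‖A u‖² ‖u‖² - ⟪A u, u⟫²`. Its equality case says `A ṽ ∈ ℝ ṽ`, which transfers to `v` since
`exp (π X)` is invertible and commutes with `π Y`. A nonnegative second derivative on every line
gives convexity.
-/

open scoped InnerProductSpace

open NormedSpace Set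

theorem momentMap_inner {E V : Type*} [NormedAddCommGroup E] [InnerProductSpace ℝ E]
    [FiniteDimensional ℝ E] [NormedAddCommGroup V] [InnerProductSpace ℝ V]
    (π : E →ₗ[ℝ] V →L[ℝ] V) (v : V) (X : E) :
    ⟪momentMap π v, X⟫_ℝ = ⟪π X v, v⟫_ℝ / ‖v‖ ^ 2 := by
  simp [momentMap, InnerProductSpace.toDual_symm_apply]

section Exponential

variable {𝔸 : Type*} [NormedRing 𝔸] [NormedAlgebra ℝ 𝔸] [CompleteSpace 𝔸]

theorem hasDerivAt_exp_add_smul_of_commute {A B : 𝔸} (h : Commute A B) (t : ℝ) :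
    HasDerivAt (fun s : ℝ => exp (A + s • B)) (B * exp (A + t • B)) t := by
  -- `exp_add_of_commute` needs a `ℚ`-algebra structure, obtained by restricting scalars
  let : NormedAlgebra ℚ 𝔸 := .restrictScalars ℚ ℝ 𝔸
  have hsplit (s : ℝ) : exp (A + s • B) = exp (s • B) * exp A := by
    rw [add_comm, exp_add_of_commute (h.symm.smul_left s)]
  simp only [hsplit]
  exact ((hasDerivAt_exp_smul_const' B t).mul_const (exp A)).congr_deriv (mul_assoc _ _ _)

variable {V : Type*} [NormedAddCommGroup V] [NormedSpace ℝ V] [CompleteSpace V]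

theorem hasDerivAt_exp_add_smul_apply_of_commute {A B : V →L[ℝ] V} (h : Commute A B) (w : V)
    (t : ℝ) : HasDerivAt (fun s : ℝ => exp (A + s • B) w) (B (exp (A + t • B) w)) t := by
  simpa using (hasDerivAt_exp_add_smul_of_commute h t).clm_apply (hasDerivAt_const t w)

theorem injective_exp_apply (A : V →L[ℝ] V) : Function.Injective (exp A : V →L[ℝ] V) := by
  let : NormedAlgebra ℚ (V →L[ℝ] V) := .restrictScalars ℚ ℝ (V →L[ℝ] V)
  obtain ⟨B, hB⟩ := (isUnit_exp A).exists_left_inv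
  exact Function.LeftInverse.injective (g := B) fun w => by
    rw [← mul_apply_eq_comp, hB, one_apply_eq_self]

end Exponential

theorem exists_apply_eq_smul_iff_of_commute {R M : Type*} [Semiring R] [TopologicalSpace M]
    [AddCommMonoid M] [Module R M] {E A : M →L[R] M} (hE : Function.Injective E)
    (h : Commute E A) (v : M) : (∃ r : R, A (E v) = r • E v) ↔ ∃ r : R, A v = r • v := by
  refine exists_congr fun r => ?_
  rw [← map_smul, ← mul_apply_eq_comp, ← h.eq, mul_apply_eq_comp, hE.eq_iff]

section CauchySchwarz

variable {F : Type*} [NormedAddCommGroup F] [InnerProductSpace ℝ F]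

def cauchySchwarzGap (x y : F) : ℝ := ‖x‖ ^ 2 * ‖y‖ ^ 2 - ⟪x, y⟫_ℝ ^ 2

theorem cauchySchwarzGap_nonneg (x y : F) : 0 ≤ cauchySchwarzGap x y := by
  rw [cauchySchwarzGap, sub_nonneg, ← mul_pow, ← sq_abs]
  gcongr
  exact abs_real_inner_le_norm x y

theorem cauchySchwarzGap_eq_zero_iff {x y : F} (hy : y ≠ 0) :
    cauchySchwarzGap x y = 0 ↔ ∃ r : ℝ, x = r • y := by
  have hcs : ‖⟪y, x⟫_ℝ‖ = ‖y‖ * ‖x‖ ↔ y = 0 ∨ ∃ r : ℝ, x = r • y :=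
    (norm_inner_eq_norm_tfae ℝ y x).out 0 2
  rw [cauchySchwarzGap, sub_eq_zero, ← mul_pow, sq_eq_sq_iff_abs_eq_abs, abs_mul, abs_norm,
    abs_norm, ← Real.norm_eq_abs, ← real_inner_comm x y, eq_comm, mul_comm, hcs, or_iff_right hy]

end CauchySchwarz

section Rayleigh

variable {V : Type*} [NormedAddCommGroup V] [InnerProductSpace ℝ V] {A : V →L[ℝ] V}
  {u : ℝ → V} {t : ℝ}

theorem hasDerivAt_log_norm_sq_of_hasDerivAt (hu : HasDerivAt u (A (u t)) t) (h0 : u t ≠ 0) :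
    HasDerivAt (fun s => Real.log (‖u s‖ ^ 2)) (2 * (⟪A (u t), u t⟫_ℝ / ‖u t‖ ^ 2)) t := by
  convert hu.norm_sq.log (by positivity) using 1
  rw [real_inner_comm]
  ring

theorem hasDerivAt_two_mul_rayleigh_of_hasDerivAt (hA : (A : V →ₗ[ℝ] V).IsSymmetric)
    (hu : HasDerivAt u (A (u t)) t) (h0 : u t ≠ 0) :
    HasDerivAt (fun s => 2 * (⟪A (u s), u s⟫_ℝ / ‖u s‖ ^ 2))
      (4 / ‖u t‖ ^ 4 * cauchySchwarzGap (A (u t)) (u t)) t := by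
  have hAu : HasDerivAt (fun s => A (u s)) (A (A (u t))) t := A.hasFDerivAt.comp_hasDerivAt t hu
  have hnum : HasDerivAt (fun s => ⟪A (u s), u s⟫_ℝ) (2 * ‖A (u t)‖ ^ 2) t := by
    refine (hAu.inner ℝ hu).congr_deriv ?_
    rw [show ⟪A (A (u t)), u t⟫_ℝ = ⟪A (u t), A (u t)⟫_ℝ from hA _ _, real_inner_self_eq_norm_sq]
    ring
  have hnorm : ‖u t‖ ≠ 0 := norm_ne_zero_iff.2 h0
  refine ((hnum.div hu.norm_sq (by positivity)).const_mul 2).congr_deriv ?_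
  rw [cauchySchwarzGap, real_inner_comm (u t)]
  field_simp
  ring

end Rayleigh

section Convexity

variable {𝕜 E β : Type*} [Field 𝕜] [LinearOrder 𝕜] [IsStrictOrderedRing 𝕜] [AddCommGroup E]
  [Module 𝕜 E] [AddCommMonoid β] [PartialOrder β] [SMul 𝕜 β]

theorem convexOn_univ_of_forall_convexOn_line {f : E → β}
    (h : ∀ a w : E, ConvexOn 𝕜 univ fun t : 𝕜 => f (a + t • w)) : ConvexOn 𝕜 univ f := by
  refine ⟨convex_univ, fun a _ b _ s t hs ht hst => ?_⟩
  have key := (h a (b - a)).2 (mem_univ 0) (mem_univ 1) hs ht hst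
  obtain rfl : s = 1 - t := by linear_combination hst
  have hline : a + t • (b - a) = (1 - t) • a + t • b := by module
  simpa [hline] using key

end Convexity

theorem convexOn_univ_of_hasDerivAt_of_hasDerivAt_nonneg {f f' f'' : ℝ → ℝ}
    (hf : ∀ t, HasDerivAt f (f' t) t) (hf' : ∀ t, HasDerivAt f' (f'' t) t) (hf'' : 0 ≤ f'') :
    ConvexOn ℝ univ f := by
  refine Monotone.convexOn_univ_of_deriv (fun t => (hf t).differentiableAt) ?_
  rw [funext fun t => (hf t).deriv]
  exact monotone_of_hasDerivAt_nonneg hf' hf''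

/-- properties of `ρ(X) = ln ‖exp(π X) v‖²`: its first directional
derivative is `2⟪m(exp(π X)v), Y⟫`, its second directional derivative is
`(4/‖ṽ‖⁴)(‖π(Y)ṽ‖²‖ṽ‖² − ⟪π(Y)ṽ, ṽ⟫²) ≥ 0`, with equality iff `π(Y)v = λv`;
in particular `ρ` is convex. -/
theorem log_norm_sq_exp_orbit_derivs
    {𝔞 V : Type*} [NormedAddCommGroup 𝔞] [InnerProductSpace ℝ 𝔞] [FiniteDimensional ℝ 𝔞]
    [NormedAddCommGroup V] [InnerProductSpace ℝ V] [FiniteDimensional ℝ V]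
    (π : 𝔞 →ₗ[ℝ] V →L[ℝ] V)
    (hsa : ∀ X : 𝔞, ∀ v w : V, ⟪(π X) v, w⟫_ℝ = ⟪v, (π X) w⟫_ℝ)
    (hcomm : ∀ X Y : 𝔞, Commute (π X) (π Y))
    (v : V) (hv : v ≠ 0) (X Y : 𝔞)
    (ρ : 𝔞 → ℝ) (hρ : ρ = fun Z => Real.log (‖(NormedSpace.exp (π Z)) v‖ ^ 2))
    (vt : V) (hvt : vt = (NormedSpace.exp (π X)) v)
    (D : ℝ)
    (hD : D = (4 / ‖vt‖ ^ 4) * (‖(π Y) vt‖ ^ 2 * ‖vt‖ ^ 2 - ⟪(π Y) vt, vt⟫_ℝ ^ 2)) :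
    HasDerivAt (fun t : ℝ => ρ (X + t • Y)) (2 * ⟪momentMap π vt, Y⟫_ℝ) 0 ∧
    HasDerivAt
      (fun t : ℝ => 2 * ⟪momentMap π ((NormedSpace.exp (π (X + t • Y))) v), Y⟫_ℝ) D 0 ∧
    0 ≤ D ∧
    (D = 0 ↔ ∃ lam : ℝ, (π Y) v = lam • v) ∧
    ConvexOn ℝ Set.univ ρ := by
  subst hρ hvt hD
  have horbit (Z W : 𝔞) (t : ℝ) : HasDerivAt (fun s : ℝ => exp (π (Z + s • W)) v)
      (π W (exp (π (Z + t • W)) v)) t := by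
    simpa only [map_add, map_smul] using
      hasDerivAt_exp_add_smul_apply_of_commute (hcomm Z W) v t
  have hne (Z : 𝔞) : exp (π Z) v ≠ 0 := (injective_exp_apply (π Z)).ne_iff' (map_zero _) |>.2 hv
  have hfirst (Z W : 𝔞) (t : ℝ) :
      HasDerivAt (fun s : ℝ => Real.log (‖exp (π (Z + s • W)) v‖ ^ 2))
        (2 * ⟪momentMap π (exp (π (Z + t • W)) v), W⟫_ℝ) t := by
    rw [momentMap_inner]
    exact hasDerivAt_log_norm_sq_of_hasDerivAt (horbit Z W t) (hne _)
  have hsecond (Z W : 𝔞) (t : ℝ) :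
      HasDerivAt (fun s : ℝ => 2 * ⟪momentMap π (exp (π (Z + s • W)) v), W⟫_ℝ)
        (4 / ‖exp (π (Z + t • W)) v‖ ^ 4 *
          cauchySchwarzGap (π W (exp (π (Z + t • W)) v)) (exp (π (Z + t • W)) v)) t := by
    simp only [momentMap_inner]
    exact hasDerivAt_two_mul_rayleigh_of_hasDerivAt (hsa W) (horbit Z W t) (hne _)
  have hnonneg (Z W : 𝔞) :
      0 ≤ 4 / ‖exp (π Z) v‖ ^ 4 * cauchySchwarzGap (π W (exp (π Z) v)) (exp (π Z) v) :=
    mul_nonneg (by positivity) (cauchySchwarzGap_nonneg _ _)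
  have hzero : 4 / ‖exp (π X) v‖ ^ 4 * cauchySchwarzGap (π Y (exp (π X) v)) (exp (π X) v) = 0 ↔
      ∃ r : ℝ, π Y (exp (π X) v) = r • exp (π X) v := by
    rw [mul_eq_zero, or_iff_right (by positivity [hne X]), cauchySchwarzGap_eq_zero_iff (hne X)]
  refine ⟨by simpa only [zero_smul, add_zero] using hfirst X Y 0,
    by simpa only [zero_smul, add_zero, cauchySchwarzGap] using hsecond X Y 0, hnonneg X Y,
    hzero.trans <|
      exists_apply_eq_smul_iff_of_commute (injective_exp_apply _) (hcomm X Y).exp_left v,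
    convexOn_univ_of_forall_convexOn_line fun Z W =>
      convexOn_univ_of_hasDerivAt_of_hasDerivAt_nonneg (hfirst Z W) (hsecond Z W)
        fun t => hnonneg _ W⟩
end

section
/- Let v ∈ V be nonzero and set β = m_𝔞(v). Then: (a) β lies in the intrinsic interior of the convex hull of R(v); and (b) π(β)v = ‖β‖²v (i.e., v is a critical point of the norm squared of the moment map restricted to 𝔞) if and only if β = mcc(R(v)), the minimal convex combination of R(v). -/
/-!
Splitting `v = ∑ c α` into weight components, which are pairwise orthogonal because the `π X`
are self-adjoint, gives `m(v) = ∑ (‖c α‖² / ‖v‖²) • α`: a convex combination of `R(v)` with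
strictly positive weights, hence a point of the intrinsic interior of its convex hull. The same
decomposition shows that `π(β) v = ‖β‖² v` iff `⟪α, β⟫ = ‖β‖²` for every `α ∈ R(v)`. If the
hull lies in this hyperplane, `β` is its point of minimal norm. Conversely, at the point `β` of
minimal norm `⟪β, α - β⟫ ≥ 0` for every `α` in the hull, and averaging these inequalities with
the positive weights of `β` turns them into equalities.
-/

open scoped InnerProductSpace
open Finset
open scoped Classical

open Filter Topology

theorem mem_intrinsicInterior_iff_mem_nhdsWithin {𝕜 E : Type*} [Ring 𝕜] [AddCommGroup E]
    [Module 𝕜 E] [TopologicalSpace E] {s : Set E} {x : E} :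
    x ∈ intrinsicInterior 𝕜 s ↔ x ∈ affineSpan 𝕜 s ∧ s ∈ 𝓝[affineSpan 𝕜 s] x := by
  simp only [mem_intrinsicInterior, mem_interior_iff_mem_nhds]
  constructor
  · rintro ⟨y, hy, rfl⟩
    exact ⟨y.2, preimage_coe_mem_nhds_subtype.1 hy⟩
  · rintro ⟨hx, hs⟩
    exact ⟨⟨x, hx⟩, preimage_coe_mem_nhds_subtype.2 hs, rfl⟩

theorem Convex.lineMap_mem_intrinsicInterior {E : Type*} [NormedAddCommGroup E] [NormedSpace ℝ E]
    {s : Set E} (hs : Convex ℝ s) {q p : E} (hq : q ∈ s) (hp : p ∈ intrinsicInterior ℝ s)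
    {ε : ℝ} (hε₀ : 0 < ε) (hε₁ : ε ≤ 1) :
    AffineMap.lineMap q p ε ∈ intrinsicInterior ℝ s := by
  set A := affineSpan ℝ s
  rw [mem_intrinsicInterior_iff_mem_nhdsWithin] at hp ⊢
  have hqA : q ∈ A := subset_affineSpan ℝ s hq
  refine ⟨AffineMap.lineMap_mem ε hqA hp.1, ?_⟩
  set g := AffineMap.homothety q ε⁻¹
  have hgA : Set.MapsTo g A A := fun y hy => AffineMap.lineMap_mem _ hqA hy
  have hg : g (AffineMap.lineMap q p ε) = p := by
    simp [g, AffineMap.homothety_apply, AffineMap.lineMap_apply, hε₀.ne']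
  have hgs : g ⁻¹' s ∈ 𝓝[A] (AffineMap.lineMap q p ε) := by
    refine (AffineMap.homothety_continuous q ε⁻¹).continuousWithinAt.tendsto_nhdsWithin hgA ?_
    rw [hg]
    exact hp.2
  filter_upwards [hgs, self_mem_nhdsWithin] with y hy _
  have hy' : AffineMap.lineMap q (g y) ε = y := by
    simp [g, AffineMap.homothety_apply, AffineMap.lineMap_apply, hε₀.ne']
  rw [← hy']
  exact hs.lineMap_mem hq hy ⟨hε₀.le, hε₁⟩

theorem Finset.sum_smul_mem_intrinsicInterior_convexHull {E : Type*} [NormedAddCommGroup E]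
    [NormedSpace ℝ E] [FiniteDimensional ℝ E] {S : Finset E} {t : E → ℝ}
    (ht : ∀ α ∈ S, 0 < t α) (ht₁ : ∑ α ∈ S, t α = 1) :
    ∑ α ∈ S, t α • α ∈ intrinsicInterior ℝ (convexHull ℝ (S : Set E)) := by
  have hS : (convexHull ℝ (S : Set E)).Nonempty := by
    refine convexHull_nonempty_iff.2 (Finset.coe_nonempty.2 ?_)
    exact Finset.nonempty_of_sum_ne_zero (by rw [ht₁]; exact one_ne_zero)
  obtain ⟨p, hp⟩ := hS.intrinsicInterior (convex_convexHull ℝ _)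
  obtain ⟨w, hw₀, hw₁, rfl⟩ := Finset.mem_convexHull'.1 (intrinsicInterior_subset hp)
  -- write the combination as `(1 - ε) q + ε p` with `q` in the hull
  obtain ⟨ε, hε, hεt⟩ : ∃ ε : ℝ, ε ∈ Set.Ioo 0 1 ∧ ∀ α ∈ S, ε * w α < t α := by
    have hsmall : ∀ α ∈ S, ∀ᶠ ε in 𝓝[>] (0 : ℝ), ε * w α < t α := fun α hα =>
      ((continuous_id.mul continuous_const).tendsto' 0 0 (zero_mul _)).eventually
        (gt_mem_nhds (ht α hα)) |>.filter_mono nhdsWithin_le_nhds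
    exact (Filter.Eventually.and (Ioo_mem_nhdsGT one_pos)
      ((eventually_all_finset S).2 hsmall)).exists
  set u : E → ℝ := fun α => t α - ε * w α
  have hu₁ : ∑ α ∈ S, u α = 1 - ε := by
    simp [u, Finset.sum_sub_distrib, ← Finset.mul_sum, ht₁, hw₁]
  have hq : S.centerMass u id ∈ convexHull ℝ (S : Set E) :=
    S.centerMass_mem_convexHull (fun α hα => (sub_pos.2 (hεt α hα)).le)
      (by rw [hu₁]; exact sub_pos.2 hε.2) fun α hα => hα
  convert (convex_convexHull ℝ _).lineMap_mem_intrinsicInterior hq hp hε.1 hε.2.le using 1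
  rw [AffineMap.lineMap_apply_module, Finset.centerMass, hu₁,
    smul_inv_smul₀ (sub_ne_zero.2 hε.2.ne')]
  simp [u, sub_smul, mul_smul, Finset.sum_sub_distrib, Finset.smul_sum]

theorem IsMinOn.real_inner_sub_nonneg {F : Type*} [NormedAddCommGroup F]
    [InnerProductSpace ℝ F] {K : Set F} {m : F} (hmin : IsMinOn norm K m) (hK : Convex ℝ K)
    (hm : m ∈ K) {y : F} (hy : y ∈ K) : 0 ≤ ⟪m, y - m⟫_ℝ := by
  have hinf : ‖0 - m‖ = ⨅ w : K, ‖0 - (w : F)‖ := by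
    have hbdd : BddBelow (Set.range fun w : K => ‖0 - (w : F)‖) :=
      ⟨0, by rintro _ ⟨w, rfl⟩; exact norm_nonneg _⟩
    have : Nonempty K := ⟨⟨m, hm⟩⟩
    exact le_antisymm (le_ciInf fun w => by simpa using isMinOn_iff.1 hmin w w.2)
      (ciInf_le hbdd ⟨m, hm⟩)
  have hvar := (norm_eq_iInf_iff_real_inner_le_zero hK hm).1 hinf y hy
  rw [zero_sub, inner_neg_left] at hvar
  linarith

theorem LinearMap.apply_eq_of_apply_sum_smul_le {E : Type*} [AddCommGroup E] [Module ℝ E]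
    (f : E →ₗ[ℝ] ℝ) {S : Finset E} {t : E → ℝ} (ht : ∀ α ∈ S, 0 < t α)
    (ht₁ : ∑ α ∈ S, t α = 1) (hle : ∀ α ∈ S, f (∑ γ ∈ S, t γ • γ) ≤ f α) :
    ∀ α ∈ S, f α = f (∑ γ ∈ S, t γ • γ) := by
  have hzero : ∑ α ∈ S, t α * (f α - f (∑ γ ∈ S, t γ • γ)) = 0 := by
    simp only [mul_sub, Finset.sum_sub_distrib, ← Finset.sum_mul, ht₁, one_mul, map_sum,
      map_smul, smul_eq_mul, sub_self]
  intro α hα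
  have hterm := (Finset.sum_eq_zero_iff_of_nonneg fun γ hγ =>
    mul_nonneg (ht γ hγ).le (sub_nonneg.2 (hle γ hγ))).1 hzero α hα
  exact sub_eq_zero.1 ((mul_eq_zero.1 hterm).resolve_left (ht α hα).ne')

theorem forall_inner_eq_norm_sq_iff_eq_of_isMinOn {F : Type*} [NormedAddCommGroup F]
    [InnerProductSpace ℝ F] {S : Finset F} {t : F → ℝ} (ht : ∀ α ∈ S, 0 < t α)
    (ht₁ : ∑ α ∈ S, t α = 1) {m : F} (hm : m ∈ convexHull ℝ (S : Set F))
    (hmin : IsMinOn norm (convexHull ℝ (S : Set F)) m) :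
    (∀ α ∈ S, ⟪α, ∑ γ ∈ S, t γ • γ⟫_ℝ = ‖∑ γ ∈ S, t γ • γ‖ ^ 2) ↔ ∑ γ ∈ S, t γ • γ = m := by
  set β := ∑ γ ∈ S, t γ • γ
  have hβ : β ∈ convexHull ℝ (S : Set F) :=
    Finset.mem_convexHull'.2 ⟨t, fun α hα => (ht α hα).le, ht₁, rfl⟩
  constructor
  · intro hplane
    have hβm : ⟪β, m⟫_ℝ = ‖β‖ ^ 2 :=
      convexHull_min (fun α hα => (real_inner_comm α β).trans (hplane α hα))
        (convex_hyperplane (innerₗ F β).isLinear _) hm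
    have hle : ‖m‖ ^ 2 ≤ ‖β‖ ^ 2 := by gcongr; exact isMinOn_iff.1 hmin β hβ
    have hdist : ‖β - m‖ ^ 2 ≤ 0 := by
      rw [norm_sub_sq_real, hβm]
      linarith
    exact sub_eq_zero.1 (norm_eq_zero.1 (pow_eq_zero_iff two_ne_zero |>.1
      (le_antisymm hdist (sq_nonneg _))))
  · rintro rfl α hα
    have hconst := (innerₗ F β).apply_eq_of_apply_sum_smul_le ht ht₁ fun γ hγ => by
      have hγ' := hmin.real_inner_sub_nonneg (convex_convexHull ℝ _) hm (subset_convexHull ℝ _ hγ)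
      rwa [inner_sub_right, sub_nonneg] at hγ'
    rw [real_inner_comm, ← real_inner_self_eq_norm_sq]
    exact hconst α hα

theorem inner_sum_smul_of_pairwise_inner_eq_zero {ι V : Type*} [NormedAddCommGroup V]
    [InnerProductSpace ℝ V] {Δ : Finset ι} {c : ι → V}
    (horth : (Δ : Set ι).Pairwise fun α α' => ⟪c α, c α'⟫_ℝ = 0) (a : ι → ℝ) {α₀ : ι}
    (hα₀ : α₀ ∈ Δ) : ⟪∑ α ∈ Δ, a α • c α, c α₀⟫_ℝ = a α₀ * ‖c α₀‖ ^ 2 := by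
  rw [sum_inner, Finset.sum_eq_single_of_mem α₀ hα₀ fun α hα hne => by
    rw [real_inner_smul_left, horth hα hα₀ hne, mul_zero]]
  rw [real_inner_smul_left, real_inner_self_eq_norm_sq]

theorem norm_sum_sq_of_pairwise_inner_eq_zero {ι V : Type*} [NormedAddCommGroup V]
    [InnerProductSpace ℝ V] {Δ : Finset ι} {c : ι → V}
    (horth : (Δ : Set ι).Pairwise fun α α' => ⟪c α, c α'⟫_ℝ = 0) :
    ‖∑ α ∈ Δ, c α‖ ^ 2 = ∑ α ∈ Δ, ‖c α‖ ^ 2 := by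
  rw [← real_inner_self_eq_norm_sq, inner_sum]
  refine Finset.sum_congr rfl fun α hα => ?_
  simpa using inner_sum_smul_of_pairwise_inner_eq_zero horth (fun _ => 1) hα

section WeightVectors

variable {𝔞 V : Type*} [NormedAddCommGroup 𝔞] [InnerProductSpace ℝ 𝔞]
  [NormedAddCommGroup V] [InnerProductSpace ℝ V]

def IsWeightVector (π : 𝔞 →ₗ[ℝ] V →L[ℝ] V) (α : 𝔞) (x : V) : Prop :=
  ∀ X : 𝔞, π X x = ⟪α, X⟫_ℝ • x

variable {π : 𝔞 →ₗ[ℝ] V →L[ℝ] V}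

theorem IsWeightVector.inner_eq_zero (hsa : ∀ X : 𝔞, ∀ v w : V, ⟪π X v, w⟫_ℝ = ⟪v, π X w⟫_ℝ)
    {α α' : 𝔞} {x y : V} (hx : IsWeightVector π α x) (hy : IsWeightVector π α' y)
    (hne : α ≠ α') : ⟪x, y⟫_ℝ = 0 := by
  -- the eigenvalues of `π (α - α')` on `x` and `y` differ by `‖α - α'‖² ≠ 0`
  have h := hsa (α - α') x y
  rw [hx, hy, real_inner_smul_left, real_inner_smul_right, ← sub_eq_zero, ← sub_mul,
    ← inner_sub_left, real_inner_self_eq_norm_sq] at h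
  exact (mul_eq_zero.1 h).resolve_left (pow_ne_zero 2 (norm_ne_zero_iff.2 (sub_ne_zero.2 hne)))

variable {Δ : Finset 𝔞} {c : 𝔞 → V}

theorem pairwise_inner_eq_zero_of_isWeightVector
    (hsa : ∀ X : 𝔞, ∀ v w : V, ⟪π X v, w⟫_ℝ = ⟪v, π X w⟫_ℝ)
    (hc : ∀ α ∈ Δ, IsWeightVector π α (c α)) :
    (Δ : Set 𝔞).Pairwise fun α α' => ⟪c α, c α'⟫_ℝ = 0 :=
  fun α hα α' hα' hne => (hc α hα).inner_eq_zero hsa (hc α' hα') hne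

theorem apply_sum_of_isWeightVector (hc : ∀ α ∈ Δ, IsWeightVector π α (c α)) (X : 𝔞) :
    π X (∑ α ∈ Δ, c α) = ∑ α ∈ Δ, ⟪α, X⟫_ℝ • c α := by
  rw [map_sum]
  exact Finset.sum_congr rfl fun α hα => hc α hα X

theorem momentMap_sum_of_isWeightVector [FiniteDimensional ℝ 𝔞]
    (hsa : ∀ X : 𝔞, ∀ v w : V, ⟪π X v, w⟫_ℝ = ⟪v, π X w⟫_ℝ)
    (hc : ∀ α ∈ Δ, IsWeightVector π α (c α)) :
    momentMap π (∑ α ∈ Δ, c α) = ∑ α ∈ Δ, (‖c α‖ ^ 2 / ‖∑ γ ∈ Δ, c γ‖ ^ 2) • α := by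
  refine ext_inner_right ℝ fun X => ?_
  rw [momentMap, InnerProductSpace.toDual_symm_apply]
  change ⟪π X (∑ α ∈ Δ, c α), ∑ α ∈ Δ, c α⟫_ℝ / _ = _
  rw [apply_sum_of_isWeightVector hc, inner_sum, Finset.sum_div, sum_inner]
  refine Finset.sum_congr rfl fun α hα => ?_
  rw [inner_sum_smul_of_pairwise_inner_eq_zero (pairwise_inner_eq_zero_of_isWeightVector hsa hc)
    _ hα, real_inner_smul_left]
  ring

theorem apply_sum_eq_smul_iff_of_isWeightVector
    (hsa : ∀ X : 𝔞, ∀ v w : V, ⟪π X v, w⟫_ℝ = ⟪v, π X w⟫_ℝ)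
    (hc : ∀ α ∈ Δ, IsWeightVector π α (c α)) (X : 𝔞) (r : ℝ) :
    π X (∑ α ∈ Δ, c α) = r • ∑ α ∈ Δ, c α ↔ ∀ α ∈ Δ, c α ≠ 0 → ⟪α, X⟫_ℝ = r := by
  rw [← sub_eq_zero, apply_sum_of_isWeightVector hc, Finset.smul_sum, ← Finset.sum_sub_distrib]
  simp_rw [← sub_smul]
  constructor
  · intro h α hα hcα
    have hα' := inner_sum_smul_of_pairwise_inner_eq_zero
      (pairwise_inner_eq_zero_of_isWeightVector hsa hc) (fun α => ⟪α, X⟫_ℝ - r) hα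
    rw [h, inner_zero_left, eq_comm] at hα'
    exact sub_eq_zero.1 ((mul_eq_zero.1 hα').resolve_right
      (pow_ne_zero 2 (norm_ne_zero_iff.2 hcα)))
  · intro h
    refine Finset.sum_eq_zero fun α hα => ?_
    by_cases hcα : c α = 0
    · rw [hcα, smul_zero]
    · rw [h α hα hcα, sub_self, zero_smul]

end WeightVectors

theorem momentMap_mem_intrinsicInterior_and_critical_iff_mcc_general
    {𝔞 V : Type*} [NormedAddCommGroup 𝔞] [InnerProductSpace ℝ 𝔞] [FiniteDimensional ℝ 𝔞]
    [NormedAddCommGroup V] [InnerProductSpace ℝ V]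
    (π : 𝔞 →ₗ[ℝ] V →L[ℝ] V)
    (hsa : ∀ X : 𝔞, ∀ v w : V, ⟪(π X) v, w⟫_ℝ = ⟪v, (π X) w⟫_ℝ)
    (ΔV : Finset 𝔞) (v : V) (hv : v ≠ 0)
    -- `c α` is the component of `v` in the weight space `V_α`:
    (c : 𝔞 → V)
    (hc : ∀ α ∈ ΔV, ∀ X : 𝔞, (π X) (c α) = ⟪α, X⟫_ℝ • c α)
    (hsum : v = ∑ α ∈ ΔV, c α)
    (Rv : Finset 𝔞) (hRv : Rv = ΔV.filter fun α => c α ≠ 0)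
    (β : 𝔞) (hβ : β = momentMap π v)
    -- `mcc` is the (unique) point of minimal norm in the convex hull of `R(v)`:
    (mcc : 𝔞) (hmcc₁ : mcc ∈ convexHull ℝ (Rv : Set 𝔞))
    (hmcc₂ : ∀ y ∈ convexHull ℝ (Rv : Set 𝔞), ‖mcc‖ ≤ ‖y‖) :
    β ∈ intrinsicInterior ℝ (convexHull ℝ (Rv : Set 𝔞)) ∧
    ((π β) v = (‖β‖ ^ 2) • v ↔ β = mcc) := by
  subst hsum hRv hβ
  set t : 𝔞 → ℝ := fun α => ‖c α‖ ^ 2 / ‖∑ γ ∈ ΔV, c γ‖ ^ 2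
  have ht : ∀ α ∈ ΔV.filter (c · ≠ 0), 0 < t α := fun α hα => by
    rw [Finset.mem_filter] at hα
    exact div_pos (pow_pos (norm_pos_iff.2 hα.2) 2) (pow_pos (norm_pos_iff.2 hv) 2)
  have hsupp : ∀ α ∈ ΔV, t α ≠ 0 → c α ≠ 0 := fun α _ h hcα => by simp [t, hcα] at h
  have ht₁ : ∑ α ∈ ΔV.filter (c · ≠ 0), t α = 1 := by
    rw [Finset.sum_filter_of_ne hsupp, ← Finset.sum_div,
      ← norm_sum_sq_of_pairwise_inner_eq_zero (pairwise_inner_eq_zero_of_isWeightVector hsa hc),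
      div_self (pow_ne_zero 2 (norm_ne_zero_iff.2 hv))]
  have hβ : momentMap π (∑ α ∈ ΔV, c α) = ∑ α ∈ ΔV.filter (c · ≠ 0), t α • α := by
    rw [momentMap_sum_of_isWeightVector hsa hc, Finset.sum_filter_of_ne]
    exact fun α hα h => hsupp α hα (left_ne_zero_of_smul h)
  rw [hβ, apply_sum_eq_smul_iff_of_isWeightVector hsa hc,
    ← forall_inner_eq_norm_sq_iff_eq_of_isMinOn ht ht₁ hmcc₁ (isMinOn_iff.2 hmcc₂)]
  refine ⟨Finset.sum_smul_mem_intrinsicInterior_convexHull ht ht₁, ?_⟩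
  simp only [Finset.mem_filter, and_imp]

/-- for `β = m_𝔞(v)`: (a) `β` lies in the intrinsic interior of the
convex hull of `R(v)`; (b) `π(β)v = ‖β‖²v` iff `β` is the minimal convex
combination `mcc(R(v))` (the point of minimal norm in the convex hull of `R(v)`). -/
theorem momentMap_mem_intrinsicInterior_and_critical_iff_mcc
    {𝔞 V : Type*} [NormedAddCommGroup 𝔞] [InnerProductSpace ℝ 𝔞] [FiniteDimensional ℝ 𝔞]
    [NormedAddCommGroup V] [InnerProductSpace ℝ V] [FiniteDimensional ℝ V]
    (π : 𝔞 →ₗ[ℝ] V →L[ℝ] V)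
    (hsa : ∀ X : 𝔞, ∀ v w : V, ⟪(π X) v, w⟫_ℝ = ⟪v, (π X) w⟫_ℝ)
    (hcomm : ∀ X Y : 𝔞, Commute (π X) (π Y))
    (ΔV : Finset 𝔞) (v : V) (hv : v ≠ 0)
    -- `c α` is the component of `v` in the weight space `V_α`:
    (c : 𝔞 → V)
    (hc : ∀ α ∈ ΔV, ∀ X : 𝔞, (π X) (c α) = ⟪α, X⟫_ℝ • c α)
    (hsum : v = ∑ α ∈ ΔV, c α)
    (Rv : Finset 𝔞) (hRv : Rv = ΔV.filter fun α => c α ≠ 0)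
    (β : 𝔞) (hβ : β = momentMap π v)
    -- `mcc` is the (unique) point of minimal norm in the convex hull of `R(v)`:
    (mcc : 𝔞) (hmcc₁ : mcc ∈ convexHull ℝ (Rv : Set 𝔞))
    (hmcc₂ : ∀ y ∈ convexHull ℝ (Rv : Set 𝔞), ‖mcc‖ ≤ ‖y‖) :
    β ∈ intrinsicInterior ℝ (convexHull ℝ (Rv : Set 𝔞)) ∧
    ((π β) v = (‖β‖ ^ 2) • v ↔ β = mcc) :=
  momentMap_mem_intrinsicInterior_and_critical_iff_mcc_general π hsa ΔV v hv c hc hsum Rv hRv β hβ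
    mcc hmcc₁ hmcc₂
end

section
/- Let W ⊆ V be an A-invariant subspace and fix a weight α ∈ Δ(W). Then the weight space W_α = W ∩ V_α is a nice space, and every nonzero w ∈ W_α satisfies m_𝔤(w) = α and π(m_𝔤(w))w = ‖α‖² w (so every nonzero element of W_α is a critical point of the norm squared of the moment map). -/
open scoped InnerProductSpace
open Finset
open scoped Classical

/-- The weight space `V_α = {v : ∀ X ∈ 𝔞, π(X)v = ⟪α,X⟫v}`. -/
def wtSpace {E V : Type*} [NormedAddCommGroup E] [InnerProductSpace ℝ E]
    [NormedAddCommGroup V] [InnerProductSpace ℝ V]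
    (π : E →ₗ[ℝ] V →L[ℝ] V) (𝔞 : Submodule ℝ E) (α : E) : Submodule ℝ V where
  carrier := {v | ∀ X ∈ 𝔞, (π X) v = ⟪α, X⟫_ℝ • v}
  add_mem' := fun {a b} ha hb X hX => by rw [map_add, ha X hX, hb X hX, smul_add]
  zero_mem' := fun X hX => by simp
  smul_mem' := fun t a ha X hX => by rw [map_smul, ha X hX, smul_comm]

/-- The (restricted) root space `𝔤_γ = {Y : ∀ X ∈ 𝔞, [X,Y] = ⟪γ,X⟫Y}`. -/
def rootSpace {E : Type*} [NormedAddCommGroup E] [InnerProductSpace ℝ E]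
    (bk : E →ₗ[ℝ] E →ₗ[ℝ] E) (𝔞 : Submodule ℝ E) (γ : E) : Submodule ℝ E where
  carrier := {Y | ∀ X ∈ 𝔞, bk X Y = ⟪γ, X⟫_ℝ • Y}
  add_mem' := fun {a b} ha hb X hX => by rw [map_add, ha X hX, hb X hX, smul_add]
  zero_mem' := fun X hX => by simp
  smul_mem' := fun t a ha X hX => by rw [map_smul, ha X hX, smul_comm]

/-- A subspace `W ⊆ V` is `A`-invariant if `π(X)W ⊆ W` for all `X ∈ 𝔞`. -/
def AInvariant {E V : Type*} [NormedAddCommGroup E] [InnerProductSpace ℝ E]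
    [NormedAddCommGroup V] [InnerProductSpace ℝ V]
    (π : E →ₗ[ℝ] V →L[ℝ] V) (𝔞 : Submodule ℝ E) (W : Submodule ℝ V) : Prop :=
  ∀ X ∈ 𝔞, ∀ w ∈ W, (π X) w ∈ W

/-- An `A`-invariant subspace `W ⊆ V` is a nice space if `momentMap π w ∈ 𝔞` for
every nonzero `w ∈ W`. -/
def IsNiceSpace {E V : Type*} [NormedAddCommGroup E] [InnerProductSpace ℝ E]
    [FiniteDimensional ℝ E] [NormedAddCommGroup V] [InnerProductSpace ℝ V]
    (π : E →ₗ[ℝ] V →L[ℝ] V) (𝔞 : Submodule ℝ E) (W : Submodule ℝ V) : Prop :=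
  AInvariant π 𝔞 W ∧ ∀ w ∈ W, w ≠ 0 → momentMap π w ∈ 𝔞

/-- each weight space `W_α = W ∩ V_α` of an `A`-invariant subspace `W` is a
nice space whose nonzero elements `w` are critical points, with `m_𝔤(w) = α` and
`π(m_𝔤(w))w = ‖α‖²w`. -/
theorem wtSpace_isNice_and_critical
    {𝔤 V : Type*} [NormedAddCommGroup 𝔤] [InnerProductSpace ℝ 𝔤] [FiniteDimensional ℝ 𝔤]
    [NormedAddCommGroup V] [InnerProductSpace ℝ V] [FiniteDimensional ℝ V]
    -- the Lie bracket of `𝔤` and the representation `π : 𝔤 → 𝔤𝔩(V)`: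
    (bk : 𝔤 →ₗ[ℝ] 𝔤 →ₗ[ℝ] 𝔤)
    (hbk_alt : ∀ X : 𝔤, bk X X = 0)
    (hbk_jac : ∀ X Y Z : 𝔤, bk X (bk Y Z) + bk Y (bk Z X) + bk Z (bk X Y) = 0)
    (π : 𝔤 →ₗ[ℝ] V →L[ℝ] V)
    (hrep : ∀ X Y : 𝔤, π (bk X Y) = π X * π Y - π Y * π X)
    -- `𝔞` is an abelian subalgebra acting by self-adjoint operators:
    (𝔞 : Submodule ℝ 𝔤)
    (hab : ∀ X ∈ 𝔞, ∀ Y ∈ 𝔞, bk X Y = 0)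
    (hsa : ∀ X ∈ 𝔞, ∀ v w : V, ⟪(π X) v, w⟫_ℝ = ⟪v, (π X) w⟫_ℝ)
    -- roots and weights:
    (Δ𝔤 : Finset 𝔤) (hΔ𝔤 : ∀ γ ∈ Δ𝔤, γ ∈ 𝔞 ∧ γ ≠ 0)
    (ΔV : Finset 𝔤) (hΔV : ∀ α ∈ ΔV, α ∈ 𝔞)
    -- `𝔤₀ = 𝔞 ⊕ 𝔪` is the centralizer of `𝔞`, `π` is skew-adjoint on `𝔪`:
    (𝔪 : Submodule ℝ 𝔤)
    (hskew : ∀ Y ∈ 𝔪, ∀ v w : V, ⟪(π Y) v, w⟫_ℝ = -⟪v, (π Y) w⟫_ℝ)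
    (h𝔞𝔪 : ∀ X ∈ 𝔞, ∀ Y ∈ 𝔪, ⟪X, Y⟫_ℝ = 0)
    (h𝔤₀ : ∀ Z : 𝔤, (∀ X ∈ 𝔞, bk X Z = 0) ↔ Z ∈ 𝔞 ⊔ 𝔪)
    -- the orthogonal restricted-root space decomposition of `𝔤`:
    (h𝔤dec : (𝔞 ⊔ 𝔪) ⊔ (⨆ γ ∈ Δ𝔤, rootSpace bk 𝔞 γ) = ⊤)
    (h𝔤orth : ∀ γ ∈ Δ𝔤, ∀ Y ∈ rootSpace bk 𝔞 γ, ∀ Z : 𝔤,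
      (Z ∈ 𝔞 ⊔ 𝔪 ∨ ∃ γ' ∈ Δ𝔤, γ' ≠ γ ∧ Z ∈ rootSpace bk 𝔞 γ') → ⟪Y, Z⟫_ℝ = 0)
    -- the weight space decomposition of `V`:
    (hVdec : (⨆ α ∈ ΔV, wtSpace π 𝔞 α) = ⊤)
    (W : Submodule ℝ V) (hWinv : AInvariant π 𝔞 W)
    (α : 𝔤) (hα : α ∈ ΔV) (hWα : W ⊓ wtSpace π 𝔞 α ≠ ⊥)
    :
    IsNiceSpace π 𝔞 (W ⊓ wtSpace π 𝔞 α) ∧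
    ∀ w ∈ W ⊓ wtSpace π 𝔞 α, w ≠ 0 →
      momentMap π w = α ∧ (π (momentMap π w)) w = (‖α‖ ^ 2) • w := by
  have hα𝔞 : α ∈ 𝔞 := hΔV α hα
  -- key computation: the moment-map functional equals ⟪α, ·⟫ on all of 𝔤
  have key : ∀ w : V, w ∈ wtSpace π 𝔞 α → ∀ Y : 𝔤,
      ⟪(π Y) w, w⟫_ℝ = ⟪α, Y⟫_ℝ * ‖w‖ ^ 2 := by
    intro w hw
    have hker : ∀ Y : 𝔤, Y ∈ LinearMap.ker
        ({ toFun := fun Y => ⟪(π Y) w, w⟫_ℝ - ⟪α, Y⟫_ℝ * ‖w‖ ^ 2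
           map_add' := fun X Y => by
             simp [map_add, ContinuousLinearMap.add_apply, inner_add_left, inner_add_right]
             ring
           map_smul' := fun c X => by
             simp [map_smul, ContinuousLinearMap.smul_apply, inner_smul_left, inner_smul_right]
             ring } : 𝔤 →ₗ[ℝ] ℝ) := by
      intro Y
      have : (⊤ : Submodule ℝ 𝔤) ≤ LinearMap.ker
          ({ toFun := fun Y => ⟪(π Y) w, w⟫_ℝ - ⟪α, Y⟫_ℝ * ‖w‖ ^ 2
             map_add' := fun X Y => by
               simp [map_add, ContinuousLinearMap.add_apply, inner_add_left, inner_add_right]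
               ring
             map_smul' := fun c X => by
               simp [map_smul, ContinuousLinearMap.smul_apply, inner_smul_left, inner_smul_right]
               ring } : 𝔤 →ₗ[ℝ] ℝ) := by
        rw [← h𝔤dec]
        apply sup_le
        · apply sup_le
          · intro X hX
            simp only [LinearMap.mem_ker, LinearMap.coe_mk, AddHom.coe_mk]
            rw [hw X hX, real_inner_smul_left, real_inner_self_eq_norm_sq]
            ring
          · intro Z hZ
            simp only [LinearMap.mem_ker, LinearMap.coe_mk, AddHom.coe_mk]
            have h1 : ⟪(π Z) w, w⟫_ℝ = 0 := by
              have h := hskew Z hZ w w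
              have h' : ⟪w, (π Z) w⟫_ℝ = ⟪(π Z) w, w⟫_ℝ := real_inner_comm _ _
              linarith
            rw [h1, h𝔞𝔪 α hα𝔞 Z hZ]
            ring
        · apply iSup_le; intro γ; apply iSup_le; intro hγ
          intro Z hZ
          obtain ⟨hγ𝔞, hγ0⟩ := hΔ𝔤 γ hγ
          simp only [LinearMap.mem_ker, LinearMap.coe_mk, AddHom.coe_mk]
          have h2 : ⟪α, Z⟫_ℝ = 0 := by
            rw [real_inner_comm]
            exact h𝔤orth γ hγ Z hZ α (Or.inl (Submodule.mem_sup_left hα𝔞))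
          -- π Z w lies in the weight space of α + γ
          have hwt : (π γ) ((π Z) w) = (⟪α, γ⟫_ℝ + ⟪γ, γ⟫_ℝ) • ((π Z) w) := by
            have hc := congrArg (fun T : V →L[ℝ] V => T w) (hrep γ Z)
            simp only [ContinuousLinearMap.sub_apply, ContinuousLinearMap.mul_apply] at hc
            have hbkY : bk γ Z = ⟪γ, γ⟫_ℝ • Z := hZ γ hγ𝔞
            rw [hbkY, map_smul] at hc
            simp only [ContinuousLinearMap.smul_apply] at hc
            have hπγw : (π γ) w = ⟪α, γ⟫_ℝ • w := hw γ hγ𝔞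
            rw [hπγw, map_smul] at hc
            rw [add_smul]
            rw [eq_sub_iff_add_eq] at hc
            rw [← hc]
            module
          have h1 : ⟪(π Z) w, w⟫_ℝ = 0 := by
            have hselfadj := hsa γ hγ𝔞 ((π Z) w) w
            rw [hwt, hw γ hγ𝔞] at hselfadj
            rw [real_inner_smul_left, real_inner_smul_right] at hselfadj
            have hγγ : ⟪γ, γ⟫_ℝ ≠ 0 := by
              simpa [inner_self_eq_zero] using hγ0
            have : ⟪γ, γ⟫_ℝ * ⟪(π Z) w, w⟫_ℝ = 0 := by linarith
            exact (mul_eq_zero.mp this).resolve_left hγγ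
          rw [h1, h2]; ring
      exact this (Submodule.mem_top)
    intro Y
    have := hker Y
    simp only [LinearMap.mem_ker, LinearMap.coe_mk, AddHom.coe_mk] at this
    linarith
  have hmm : ∀ w : V, w ∈ wtSpace π 𝔞 α → w ≠ 0 → momentMap π w = α := by
    intro w hw hw0
    have hnorm : (‖w‖ : ℝ) ^ 2 ≠ 0 := pow_ne_zero 2 (norm_ne_zero_iff.mpr hw0)
    unfold momentMap
    have heq : LinearMap.toContinuousLinearMap
        ({ toFun := fun X => ⟪(π X) w, w⟫_ℝ / ‖w‖ ^ 2
           map_add' := fun X Y => by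
             simp [map_add, ContinuousLinearMap.add_apply, inner_add_left, add_div]
           map_smul' := fun c X => by
             simp [map_smul, ContinuousLinearMap.smul_apply, inner_smul_left, mul_div_assoc] }
          : 𝔤 →ₗ[ℝ] ℝ) = InnerProductSpace.toDual ℝ 𝔤 α := by
      ext Y
      rw [InnerProductSpace.toDual_apply_apply]
      simp only [LinearMap.coe_toContinuousLinearMap', LinearMap.coe_mk, AddHom.coe_mk]
      rw [key w hw Y]
      field_simp
    rw [heq, LinearIsometryEquiv.symm_apply_apply]
  refine ⟨⟨?_, ?_⟩, ?_⟩
  · intro X hX v hv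
    refine ⟨hWinv X hX v hv.1, ?_⟩
    have : (π X) v = ⟪α, X⟫_ℝ • v := hv.2 X hX
    rw [this]
    exact Submodule.smul_mem _ _ hv.2
  · intro w hw hw0
    rw [hmm w hw.2 hw0]
    exact hα𝔞
  · intro w hw hw0
    have h1 : momentMap π w = α := hmm w hw.2 hw0
    refine ⟨h1, ?_⟩
    rw [h1, hw.2 α hα𝔞, real_inner_self_eq_norm_sq]
end
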